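/- arXiv:1005.0600 — 12 statements merged into one kernel-verified Lean document; each statement's English description precedes it below -/
import Mathlib

section
/- Let p₀, p₁ be real polynomials such that p₁(n) ≠ 0 for every natural number n, and let n₀ be a natural number that is strictly larger than every real root of p₀ and strictly larger than every real root of p₁. Let f : ℕ → ℝ satisfy p₀(n)·f(n) + p₁(n)·f(n+1) = 0 for all n ∈ ℕ. If f(n) ≥ 0 for all natural numbers n ≤ n₀ + 1, then f(n) ≥ 0 for all n ∈ ℕ. -/
open Polynomial Filter

/-- A continuous function with no zeros on `[a, ∞)` has constant sign there. -/
lemma sign_const_aux (g : ℝ → ℝ) (hg : Continuous g) (a x : ℝ) (hax : a ≤ x)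
    (h : ∀ y : ℝ, a ≤ y → g y ≠ 0) : 0 < g a * g x := by
  rcases lt_or_gt_of_ne (h a le_rfl) with ha | ha
  · rcases lt_or_gt_of_ne (h x hax) with hx | hx
    · nlinarith
    · obtain ⟨y, hy, hy0⟩ := intermediate_value_Icc hax hg.continuousOn
        (Set.mem_Icc.mpr ⟨ha.le, hx.le⟩)
      exact absurd hy0 (h y hy.1)
  · rcases lt_or_gt_of_ne (h x hax) with hx | hx
    · obtain ⟨y, hy, hy0⟩ := intermediate_value_Icc' hax hg.continuousOn
        (Set.mem_Icc.mpr ⟨hx.le, ha.le⟩)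
      exact absurd hy0 (h y hy.1)
    · nlinarith

theorem stmt_0 (p₀ p₁ : Polynomial ℝ)
    (hp₁ : ∀ n : ℕ, p₁.eval (n : ℝ) ≠ 0)
    (n₀ : ℕ)
    (hroot₀ : ∀ x : ℝ, p₀.eval x = 0 → x < (n₀ : ℝ))
    (hroot₁ : ∀ x : ℝ, p₁.eval x = 0 → x < (n₀ : ℝ))
    (f : ℕ → ℝ)
    (hrec : ∀ n : ℕ, p₀.eval (n : ℝ) * f n + p₁.eval (n : ℝ) * f (n + 1) = 0)
    (hinit : ∀ n : ℕ, n ≤ n₀ + 1 → f n ≥ 0) :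
    ∀ n : ℕ, f n ≥ 0 := by
  set g : ℝ → ℝ := fun x => p₀.eval x * p₁.eval x with hgdef
  have hgcont : Continuous g := (p₀.continuous).mul (p₁.continuous)
  have hgne : ∀ y : ℝ, (n₀ : ℝ) ≤ y → g y ≠ 0 := by
    intro y hy
    simp only [hgdef, mul_ne_zero_iff]
    constructor
    · intro h0; exact absurd (hroot₀ y h0) (not_lt.mpr hy)
    · intro h0; exact absurd (hroot₁ y h0) (not_lt.mpr hy)
  have hsign : ∀ m : ℕ, n₀ ≤ m → 0 < g (n₀ : ℝ) * g (m : ℝ) := fun m hm =>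
    sign_const_aux g hgcont _ _ (by exact_mod_cast hm) hgne
  have hp1sq : ∀ m : ℕ, 0 < p₁.eval (m : ℝ) ^ 2 := fun m =>
    lt_of_le_of_ne (sq_nonneg _) (Ne.symm (pow_ne_zero 2 (hp₁ m)))
  have hkey : ∀ m : ℕ, p₁.eval (m : ℝ) ^ 2 * f (m + 1) = -(g (m : ℝ)) * f m := by
    intro m
    simp only [hgdef]
    linear_combination (p₁.eval (m : ℝ)) * hrec m
  rcases lt_or_gt_of_ne (hgne (n₀ : ℝ) le_rfl) with hneg | hpos
  · -- g < 0 on [n₀, ∞): the multiplier -p₀/p₁ is positive, induct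
    have hgm : ∀ m : ℕ, n₀ ≤ m → g (m : ℝ) < 0 := by
      intro m hm
      have := hsign m hm
      nlinarith
    intro n
    induction n with
    | zero => exact hinit 0 (by omega)
    | succ m ih =>
      rcases le_or_gt (m + 1) (n₀ + 1) with h | h
      · exact hinit _ h
      · have hm : n₀ ≤ m := by omega
        have h1 := hkey m
        have h2 := hgm m hm
        have h3 := hp1sq m
        nlinarith
  · -- g > 0 on [n₀, ∞): then f is eventually 0
    have hgm : ∀ m : ℕ, n₀ ≤ m → 0 < g (m : ℝ) := by
      intro m hm
      have := hsign m hm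
      nlinarith
    have hz0 : f (n₀ + 1) = 0 := by
      have h1 := hkey n₀
      have h2 := hgm n₀ le_rfl
      have h3 := hp1sq n₀
      have h4 := hinit n₀ (by omega)
      have h5 := hinit (n₀ + 1) (by omega)
      nlinarith
    have hz : ∀ k : ℕ, f (n₀ + 1 + k) = 0 := by
      intro k
      induction k with
      | zero => exact hz0
      | succ j ih =>
        have h1 := hkey (n₀ + 1 + j)
        have h3 := hp1sq (n₀ + 1 + j)
        have : p₁.eval ((n₀ + 1 + j : ℕ) : ℝ) ^ 2 * f (n₀ + 1 + j + 1) = 0 := by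
          rw [h1, ih]; ring
        have := (mul_eq_zero.mp this).resolve_left (ne_of_gt h3)
        simpa [Nat.add_assoc] using this
    intro n
    rcases le_or_gt n (n₀ + 1) with h | h
    · exact hinit n h
    · have : f n = 0 := by
        have := hz (n - (n₀ + 1))
        rwa [Nat.add_sub_cancel' (by omega : n₀ + 1 ≤ n)] at this
      linarith
end

section
/- Let r ≥ 1, let p₀, …, p_r be real polynomials with p_r(n) ≠ 0 for every natural number n, and let f : ℕ → ℝ satisfy p₀(n)f(n) + p₁(n)f(n+1) + ⋯ + p_r(n)f(n+r) = 0 for all n ∈ ℕ. Suppose there exist a real number μ ≥ 0 and a natural number n₀ such that: (i) f(k) ≥ 0 for all k ≤ n₀; (ii) f(n₀+i+1) ≥ μ·f(n₀+i) for all i with 0 ≤ i ≤ r−2; and (iii) for every natural number n ≥ n₀ and all real numbers y₀, …, y_{r−1} with y₀ ≥ 0 and y_{i+1} ≥ μ·y_i for 0 ≤ i ≤ r−2, one has −(p₀(n)/p_r(n))·y₀ − (p₁(n)/p_r(n))·y₁ − ⋯ − (p_{r−1}(n)/p_r(n))·y_{r−1} ≥ μ·y_{r−1}. Then f(n) ≥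 0 for all n ∈ ℕ. -/
/-!
With `μ ≥ 0`, the ratio invariant `f (n + 1) ≥ μ * f n` from `n₀` on propagates nonnegativity
upwards from `f n₀ ≥ 0`. The invariant itself propagates by strong induction: solving the
recurrence for `f (n + r)` turns hypothesis (iii), applied to the window
`f n, …, f (n + r - 1)`, into `f (n + r) ≥ μ * f (n + r - 1)`.
-/

open Polynomial Finset

theorem neg_sum_div_mul_eq_of_sum_range_succ_eq_zero {K : Type*} [Field K] {r : ℕ}
    {a x : ℕ → K} (ha : a r ≠ 0) (h : ∑ i ∈ range (r + 1), a i * x i = 0) :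
    -∑ i ∈ range r, a i / a r * x i = x r := by
  rw [sum_range_succ] at h
  have hdiv : ∑ i ∈ range r, a i / a r * x i = (∑ i ∈ range r, a i * x i) / a r := by
    rw [sum_div]
    exact sum_congr rfl fun i _ => by ring
  rw [hdiv, eq_neg_of_add_eq_zero_left h]
  field_simp

section RatioBound

variable {μ : ℝ} {g : ℕ → ℝ}

theorem nonneg_of_mul_le_succ (hμ : 0 ≤ μ) (h0 : 0 ≤ g 0) {m : ℕ}
    (hg : ∀ i < m, μ * g i ≤ g (i + 1)) : 0 ≤ g m := by
  induction m with
  | zero => exact h0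
  | succ m ih =>
    have hm : 0 ≤ g m := ih fun i hi => hg i (by omega)
    exact (mul_nonneg hμ hm).trans (hg m m.lt_succ_self)

theorem mul_le_succ_of_window {r : ℕ} (hμ : 0 ≤ μ) (hr : 1 ≤ r) (h0 : 0 ≤ g 0)
    (hstart : ∀ i, i + 1 < r → μ * g i ≤ g (i + 1))
    (hwindow : ∀ k, 0 ≤ g k → (∀ i, i + 1 < r → μ * g (k + i) ≤ g (k + i + 1)) →
      μ * g (k + (r - 1)) ≤ g (k + r)) :
    ∀ m, μ * g m ≤ g (m + 1) := by
  intro m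
  induction m using Nat.strong_induction_on with
  | _ m ih =>
    by_cases hm : m + 1 < r
    · exact hstart m hm
    · obtain ⟨k, hk⟩ : ∃ k, m + 1 = k + r := ⟨m + 1 - r, by omega⟩
      have hgk : 0 ≤ g k := nonneg_of_mul_le_succ hμ h0 fun i hi => ih i (by omega)
      have hstep := hwindow k hgk fun i hi => ih (k + i) (by omega)
      rwa [show k + (r - 1) = m by omega, ← hk] at hstep

end RatioBound

theorem stmt_1 (r : ℕ) (hr : 1 ≤ r) (p : ℕ → Polynomial ℝ)
    (hpr : ∀ n : ℕ, (p r).eval (n : ℝ) ≠ 0)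
    (f : ℕ → ℝ)
    (hrec : ∀ n : ℕ, ∑ i ∈ Finset.range (r + 1), (p i).eval (n : ℝ) * f (n + i) = 0)
    (μ : ℝ) (hμ : μ ≥ 0) (n₀ : ℕ)
    (hinit : ∀ k : ℕ, k ≤ n₀ → f k ≥ 0)
    (hstep : ∀ i : ℕ, i + 1 < r → f (n₀ + i + 1) ≥ μ * f (n₀ + i))
    (hind : ∀ n : ℕ, n₀ ≤ n → ∀ y : ℕ → ℝ,
      y 0 ≥ 0 → (∀ i : ℕ, i + 1 < r → y (i + 1) ≥ μ * y i) →
      -∑ i ∈ Finset.range r, ((p i).eval (n : ℝ) / (p r).eval (n : ℝ)) * y i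
        ≥ μ * y (r - 1)) :
    ∀ n : ℕ, f n ≥ 0 := by
  have hf₀ : 0 ≤ f (n₀ + 0) := hinit n₀ le_rfl
  have hratio : ∀ m, μ * f (n₀ + m) ≤ f (n₀ + (m + 1)) := by
    refine mul_le_succ_of_window (g := fun m => f (n₀ + m)) hμ hr hf₀ hstep ?_
    intro k hk hchain
    have htop := neg_sum_div_mul_eq_of_sum_range_succ_eq_zero
      (x := fun i => f (n₀ + k + i)) (hpr (n₀ + k)) (hrec (n₀ + k))
    have hwin := hind (n₀ + k) (by omega) (fun i => f (n₀ + k + i)) (by simpa using hk)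
      fun i hi => by simpa only [add_assoc] using hchain i hi
    rw [htop] at hwin
    simpa only [add_assoc] using hwin
  intro n
  rcases le_or_gt n n₀ with h | h
  · exact hinit n h
  · obtain ⟨m, rfl⟩ := Nat.exists_eq_add_of_le h.le
    exact nonneg_of_mul_le_succ (g := fun m => f (n₀ + m)) hμ hf₀ fun i _ => hratio i
end

section
/- Let u be a real number with −1 < u < 0, and let p₀, p₁, p₂ be real polynomials with p₂(n) ≠ 0 for every natural number n, such that p₁(n)/p₂(n) → u+1 and p₀(n)/p₂(n) → −u as n → ∞. Then there exists a natural number n₀ such that every sequence f : ℕ → ℝ satisfying p₂(n)f(n+2) − p₁(n)f(n+1) − p₀(n)f(n) = 0 for all n ∈ ℕ and f(n) ≥ 0 for all natural numbers n ≤ n₀ + 1 satisfies f(n) ≥ 0 for all n ∈ ℕ. -/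
open Polynomial Filter

theorem stmt_3 (u : ℝ) (hu₁ : -1 < u) (hu₂ : u < 0)
    (p₀ p₁ p₂ : Polynomial ℝ)
    (hp₂ : ∀ n : ℕ, p₂.eval (n : ℝ) ≠ 0)
    (hlim₁ : Tendsto (fun n : ℕ => p₁.eval (n : ℝ) / p₂.eval (n : ℝ)) atTop (nhds (u + 1)))
    (hlim₀ : Tendsto (fun n : ℕ => p₀.eval (n : ℝ) / p₂.eval (n : ℝ)) atTop (nhds (-u))) :
    ∃ n₀ : ℕ, ∀ f : ℕ → ℝ,
      (∀ n : ℕ, p₂.eval (n : ℝ) * f (n + 2) - p₁.eval (n : ℝ) * f (n + 1)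
        - p₀.eval (n : ℝ) * f n = 0) →
      (∀ n : ℕ, n ≤ n₀ + 1 → f n ≥ 0) →
      ∀ n : ℕ, f n ≥ 0 := by
  have h₁ : ∀ᶠ n : ℕ in atTop, 0 < p₁.eval (n : ℝ) / p₂.eval (n : ℝ) :=
    hlim₁.eventually (eventually_gt_nhds (by linarith))
  have h₀ : ∀ᶠ n : ℕ in atTop, 0 < p₀.eval (n : ℝ) / p₂.eval (n : ℝ) :=
    hlim₀.eventually (eventually_gt_nhds (by linarith))
  obtain ⟨n₀, hn₀⟩ := (h₁.and h₀).exists_forall_of_atTop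
  refine ⟨n₀, fun f hrec hinit n => ?_⟩
  induction n using Nat.strong_induction_on with
  | _ n ih =>
    rcases le_or_gt n (n₀ + 1) with h | h
    · exact hinit n h
    · obtain ⟨m, rfl⟩ : ∃ m, n = m + 2 := ⟨n - 2, by omega⟩
      have hm : n₀ ≤ m := by omega
      obtain ⟨r1, r0⟩ := hn₀ m hm
      have key : f (m + 2) = (p₁.eval (m : ℝ) / p₂.eval (m : ℝ)) * f (m + 1)
          + (p₀.eval (m : ℝ) / p₂.eval (m : ℝ)) * f m := by
        have h2 := hp₂ m
        field_simp
        linarith [hrec m]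
      rw [key]
      have hf1 := ih (m + 1) (by omega)
      have hf0 := ih m (by omega)
      positivity
end

section
/- Let u be a real number with 0 < u < 1 and let n₀ be a natural number. Define f : ℕ → ℝ by f(n) = −1 + u^(n − n₀ + 1), where the exponent n − n₀ + 1 is an integer (possibly negative) and the power is an integer power of the positive real u. Then: (i) f(n+2) − (u+1)·f(n+1) + u·f(n) = 0 for all n ∈ ℕ; (ii) f(n) ≥ 0 for all natural numbers n < n₀; and (iii) f(n) < 0 for all natural numbers n ≥ n₀. -/
theorem recurrence_of_eq_add_mul_zpow {K : Type*} [Field K] {u : K} (hu : u ≠ 0)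
    {c₀ c₁ : K} {m : ℤ} {f : ℕ → K} (hf : ∀ n : ℕ, f n = c₀ + c₁ * u ^ ((n : ℤ) + m))
    (n : ℕ) : f (n + 2) - (u + 1) * f (n + 1) + u * f n = 0 := by
  have h₁ : ((n + 1 : ℕ) : ℤ) + m = (n + m) + 1 := by push_cast; ring
  have h₂ : ((n + 2 : ℕ) : ℤ) + m = (n + m) + 1 + 1 := by push_cast; ring
  rw [hf, hf, hf, h₁, h₂, zpow_add_one₀ hu, zpow_add_one₀ hu]
  ring

theorem stmt_4 (u : ℝ) (hu₁ : 0 < u) (hu₂ : u < 1) (n₀ : ℕ)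
    (f : ℕ → ℝ) (hf : ∀ n : ℕ, f n = -1 + u ^ ((n : ℤ) - (n₀ : ℤ) + 1)) :
    (∀ n : ℕ, f (n + 2) - (u + 1) * f (n + 1) + u * f n = 0) ∧
    (∀ n : ℕ, n < n₀ → f n ≥ 0) ∧
    (∀ n : ℕ, n₀ ≤ n → f n < 0) := by
  have hf' : ∀ n : ℕ, f n = -1 + 1 * u ^ ((n : ℤ) + (1 - n₀)) := fun n => by
    rw [hf, one_mul]
    congr 2
    ring
  refine ⟨recurrence_of_eq_add_mul_zpow hu₁.ne' hf', fun n hn => ?_, fun n hn => ?_⟩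
  · have : 1 ≤ u ^ ((n : ℤ) - n₀ + 1) := one_le_zpow_of_nonpos₀ hu₁ hu₂.le (by omega)
    linarith [hf n]
  · have : u ^ ((n : ℤ) - n₀ + 1) < 1 := zpow_lt_one₀ hu₁ hu₂ (by omega)
    linarith [hf n]
end

section
/- For all real numbers c₀, c₁ with 0 < c₁ < 2 and −c₁²/4 < c₀ < 1, there exists a real number μ with 0 < μ < 1 such that for all real y₀, y₁ with y₀ ≥ 0 and y₁ ≥ μ·y₀, one has c₀·y₀ + c₁·y₁ ≥ μ·y₁. -/
/-! Since `y₁ ≥ μ y₀ ≥ 0`, we have `c₀ y₀ + (c₁ - μ) y₁ ≥ (c₀ + μ (c₁ - μ)) y₀` whenever `μ ≤ c₁`.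
The factor `μ (c₁ - μ)` is maximal at `μ = c₁ / 2`, where it equals `c₁² / 4`, so `c₀ > -c₁² / 4`
makes the bound nonnegative, and `c₁ < 2` gives `μ < 1`. -/

theorem mul_le_add_mul_of_mul_le {c₀ c₁ μ y₀ y₁ : ℝ} (hμ : μ ≤ c₁)
    (hc : 0 ≤ c₀ + μ * (c₁ - μ)) (hy₀ : 0 ≤ y₀) (hy₁ : μ * y₀ ≤ y₁) :
    μ * y₁ ≤ c₀ * y₀ + c₁ * y₁ :=
  calc μ * y₁ ≤ μ * y₁ + (c₀ + μ * (c₁ - μ)) * y₀ := le_add_of_nonneg_right (mul_nonneg hc hy₀)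
    _ = μ * y₁ + c₀ * y₀ + (c₁ - μ) * (μ * y₀) := by ring
    _ ≤ μ * y₁ + c₀ * y₀ + (c₁ - μ) * y₁ := by gcongr
    _ = c₀ * y₀ + c₁ * y₁ := by ring

theorem stmt_7_general (c₀ c₁ : ℝ) (h₁ : 0 < c₁) (h₂ : c₁ < 2)
    (h₃ : -c₁ ^ 2 / 4 < c₀) :
    ∃ μ : ℝ, 0 < μ ∧ μ < 1 ∧
      ∀ y₀ y₁ : ℝ, y₀ ≥ 0 → y₁ ≥ μ * y₀ → c₀ * y₀ + c₁ * y₁ ≥ μ * y₁ := by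
  have hc : 0 ≤ c₀ + c₁ / 2 * (c₁ - c₁ / 2) := by
    linarith [show c₁ / 2 * (c₁ - c₁ / 2) = c₁ ^ 2 / 4 by ring]
  exact ⟨c₁ / 2, by positivity, by linarith, fun _ _ hy₀ hy₁ =>
    mul_le_add_mul_of_mul_le (by linarith) hc hy₀ hy₁⟩

theorem stmt_7 (c₀ c₁ : ℝ) (h₁ : 0 < c₁) (h₂ : c₁ < 2)
    (h₃ : -c₁ ^ 2 / 4 < c₀) (h₄ : c₀ < 1) :
    ∃ μ : ℝ, 0 < μ ∧ μ < 1 ∧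
      ∀ y₀ y₁ : ℝ, y₀ ≥ 0 → y₁ ≥ μ * y₀ → c₀ * y₀ + c₁ * y₁ ≥ μ * y₁ :=
  stmt_7_general c₀ c₁ h₁ h₂ h₃
end

section
/- Let u be a real number with −1 < u < 1 and u ≠ 0, and let p₀, p₁, p₂ be real polynomials with p₂(n) ≠ 0 for every natural number n, such that p₀(n)/p₂(n) → −u and p₁(n)/p₂(n) → u+1 as n → ∞. Then there exist a real number μ with 0 < μ < 1 and a natural number ξ such that for every natural number n ≥ ξ and all real numbers y₀, y₁ with y₀ ≥ 0 and y₁ ≥ μ·y₀, one has (p₀(n)/p₂(n))·y₀ + (p₁(n)/p₂(n))·y₁ ≥ μ·y₁. -/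
/-!
Write `a = p₀(n)/p₂(n)` and `b = p₁(n)/p₂(n)`. On the cone `y₀ ≥ 0`, `y₁ ≥ μ y₀` the form
`a y₀ + (b - μ) y₁` is nonnegative as soon as `b ≥ μ` and `a + μ (b - μ) ≥ 0`, its value on the
two boundary rays. At the limit `(a, b) = (-u, u + 1)` both conditions hold strictly for any
`μ` with `max 0 u < μ < min 1 (1 + u)`, e.g. `μ = (1 + u)/2`, since then
`-u + μ (u + 1 - μ) = (1 - μ)(μ - u) > 0`; being open, they persist for all large `n`.
-/

open Polynomial Filter Topology

/-- The induction condition of Algorithm 2 for the recurrence coefficients `a = p₀/p₂`,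
`b = p₁/p₂` and the multiplier `μ`. -/
def InductionCondition (μ a b : ℝ) : Prop :=
  ∀ y₀ y₁ : ℝ, 0 ≤ y₀ → μ * y₀ ≤ y₁ → μ * y₁ ≤ a * y₀ + b * y₁

theorem InductionCondition.of_le {μ a b : ℝ} (hb : μ ≤ b) (hab : 0 ≤ a + μ * (b - μ)) :
    InductionCondition μ a b := by
  intro y₀ y₁ hy₀ hy₁
  have hcone : 0 ≤ (b - μ) * (y₁ - μ * y₀) := mul_nonneg (sub_nonneg.2 hb) (sub_nonneg.2 hy₁)
  nlinarith [mul_nonneg hab hy₀]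

theorem eventually_inductionCondition {α : Type*} {l : Filter α} {a b : α → ℝ} {μ a₀ b₀ : ℝ}
    (ha : Tendsto a l (𝓝 a₀)) (hb : Tendsto b l (𝓝 b₀)) (hμ : μ < b₀)
    (hab : 0 < a₀ + μ * (b₀ - μ)) :
    ∀ᶠ x in l, InductionCondition μ (a x) (b x) := by
  have hlim : Tendsto (fun x => a x + μ * (b x - μ)) l (𝓝 (a₀ + μ * (b₀ - μ))) :=
    ha.add (tendsto_const_nhds.mul (hb.sub tendsto_const_nhds))
  filter_upwards [hb.eventually_const_lt hμ, hlim.eventually_const_lt hab] with x hbx habx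
  exact InductionCondition.of_le hbx.le habx.le

theorem stmt_8_general (u : ℝ) (hu₁ : -1 < u) (hu₂ : u < 1)
    (p₀ p₁ p₂ : Polynomial ℝ)
    (hlim₀ : Tendsto (fun n : ℕ => p₀.eval (n : ℝ) / p₂.eval (n : ℝ)) atTop (nhds (-u)))
    (hlim₁ : Tendsto (fun n : ℕ => p₁.eval (n : ℝ) / p₂.eval (n : ℝ)) atTop (nhds (u + 1))) :
    ∃ μ : ℝ, 0 < μ ∧ μ < 1 ∧ ∃ ξ : ℕ, ∀ n : ℕ, ξ ≤ n →
      ∀ y₀ y₁ : ℝ, y₀ ≥ 0 → y₁ ≥ μ * y₀ →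
        (p₀.eval (n : ℝ) / p₂.eval (n : ℝ)) * y₀
          + (p₁.eval (n : ℝ) / p₂.eval (n : ℝ)) * y₁ ≥ μ * y₁ := by
  obtain ⟨μ, hμ₀, hμ₁, huμ, hμ⟩ : ∃ μ : ℝ, 0 < μ ∧ μ < 1 ∧ u < μ ∧ μ < u + 1 :=
    ⟨(1 + u) / 2, by linarith, by linarith, by linarith, by linarith⟩
  have hpos : 0 < -u + μ * (u + 1 - μ) := by
    have hfactor : -u + μ * (u + 1 - μ) = (1 - μ) * (μ - u) := by ring
    rw [hfactor]
    exact mul_pos (by linarith) (by linarith)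
  obtain ⟨ξ, hξ⟩ := eventually_atTop.1 (eventually_inductionCondition hlim₀ hlim₁ hμ hpos)
  exact ⟨μ, hμ₀, hμ₁, ξ, hξ⟩

theorem stmt_8 (u : ℝ) (hu₁ : -1 < u) (hu₂ : u < 1) (hu₃ : u ≠ 0)
    (p₀ p₁ p₂ : Polynomial ℝ)
    (hp₂ : ∀ n : ℕ, p₂.eval (n : ℝ) ≠ 0)
    (hlim₀ : Tendsto (fun n : ℕ => p₀.eval (n : ℝ) / p₂.eval (n : ℝ)) atTop (nhds (-u)))
    (hlim₁ : Tendsto (fun n : ℕ => p₁.eval (n : ℝ) / p₂.eval (n : ℝ)) atTop (nhds (u + 1))) :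
    ∃ μ : ℝ, 0 < μ ∧ μ < 1 ∧ ∃ ξ : ℕ, ∀ n : ℕ, ξ ≤ n →
      ∀ y₀ y₁ : ℝ, y₀ ≥ 0 → y₁ ≥ μ * y₀ →
        (p₀.eval (n : ℝ) / p₂.eval (n : ℝ)) * y₀
          + (p₁.eval (n : ℝ) / p₂.eval (n : ℝ)) * y₁ ≥ μ * y₁ :=
  stmt_8_general u hu₁ hu₂ p₀ p₁ p₂ hlim₀ hlim₁
end

section
/- Let c₀, c₁, c₂ be real numbers satisfying either (0 < c₂ < 2 and −c₂²/4 < c₁ and c₁ < 3 − 2c₂ and c₁ < c₂² and 2c₂³ + 9c₁c₂ + 27c₀ + 2(c₂² + 3c₁)^{3/2} > 0) or (0 < c₂ < 1 and c₁ ≥ c₂² and c₀ + c₁c₂ > 0). Then there exists a real number μ with 0 < μ < 1, μ < c₂, μ·(μ − c₂) < c₁, and μ³ − c₂·μ² − c₁·μ < c₀. -/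
/-! Write `f μ = μ³ - c₂ μ² - c₁ μ`. In the first region `f` has its local minimum at
`μ = (c₂ + s) / 3` with `s = √(c₂² + 3c₁)`, where `27 f(μ) = -(2c₂³ + 9c₁c₂ + 2s³)`; the
discriminant condition says exactly that this minimum lies below `c₀`, and the remaining
inequalities put the minimiser in `(0, min 1 c₂)`. In the second region `c₁ > 0`, and on
`(0, c₂)` we have `f μ < -c₁ μ`, which is below `c₀` as soon as `μ > -c₀ / c₁`; such `μ < c₂`
exist because `c₀ + c₁ c₂ > 0`. -/

namespace CubicExtension

lemma rpow_three_halves {x : ℝ} (hx : 0 ≤ x) : x ^ ((3 : ℝ) / 2) = √x ^ 3 := by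
  rw [Real.rpow_div_two_eq_sqrt _ hx]
  norm_cast

lemma cubic_at_critical_point {c₁ c₂ s : ℝ} (hs : s ^ 2 = c₂ ^ 2 + 3 * c₁) :
    27 * (((c₂ + s) / 3) ^ 3 - c₂ * ((c₂ + s) / 3) ^ 2 - c₁ * ((c₂ + s) / 3)) =
      -(2 * c₂ ^ 3 + 9 * c₁ * c₂ + 2 * s ^ 3) := by
  linear_combination 3 * s * hs

lemma exists_of_critical_value_lt {c₀ c₁ c₂ s : ℝ} (hs₀ : 0 ≤ s)
    (hs : s ^ 2 = c₂ ^ 2 + 3 * c₁) (hc₂ : 0 < c₂) (hc₂₂ : c₂ < 2)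
    (hc₁_lo : -c₂ ^ 2 / 4 < c₁) (hc₁_hi : c₁ < 3 - 2 * c₂) (hc₁_sq : c₁ < c₂ ^ 2)
    (hdisc : 2 * c₂ ^ 3 + 9 * c₁ * c₂ + 27 * c₀ + 2 * s ^ 3 > 0) :
    ∃ μ : ℝ, 0 < μ ∧ μ < 1 ∧ μ < c₂ ∧ μ * (μ - c₂) < c₁ ∧
      μ ^ 3 - c₂ * μ ^ 2 - c₁ * μ < c₀ := by
  have hs_lo : c₂ / 2 < s := lt_of_pow_lt_pow_left₀ 2 hs₀ (by nlinarith)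
  have hs_c₂ : s < 2 * c₂ := lt_of_pow_lt_pow_left₀ 2 (by positivity) (by nlinarith)
  have hs_one : s < 3 - c₂ := lt_of_pow_lt_pow_left₀ 2 (by linarith) (by nlinarith)
  refine ⟨(c₂ + s) / 3, by linarith, by linarith, by linarith, ?_, ?_⟩
  · -- `9 (c₁ - μ(μ - c₂)) = (2s - c₂)(s + c₂)`
    nlinarith [mul_pos (sub_pos.2 hs_lo) (show 0 < s + c₂ by linarith)]
  · linarith [cubic_at_critical_point hs]

lemma exists_of_pos_of_add_mul_pos {c₀ c₁ c₂ : ℝ} (hc₂ : 0 < c₂) (hc₂₁ : c₂ < 1)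
    (hc₁ : 0 < c₁) (h : 0 < c₀ + c₁ * c₂) :
    ∃ μ : ℝ, 0 < μ ∧ μ < 1 ∧ μ < c₂ ∧ μ * (μ - c₂) < c₁ ∧
      μ ^ 3 - c₂ * μ ^ 2 - c₁ * μ < c₀ := by
  have hlt : max (-c₀ / c₁) 0 < c₂ :=
    max_lt ((div_lt_iff₀ hc₁).2 (by linarith)) hc₂
  obtain ⟨μ, hμ_lo, hμ_c₂⟩ := exists_between hlt
  obtain ⟨hμ_root, hμ₀⟩ := max_lt_iff.1 hμ_lo
  have hc₀ : -c₀ < c₁ * μ := by rwa [div_lt_iff₀ hc₁, mul_comm] at hμ_root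
  have hneg : μ * (μ - c₂) < 0 := mul_neg_of_pos_of_neg hμ₀ (by linarith)
  refine ⟨μ, hμ₀, by linarith, hμ_c₂, by linarith, ?_⟩
  nlinarith [mul_neg_of_pos_of_neg hμ₀ hneg]

end CubicExtension

open CubicExtension in
theorem stmt_9 (c₀ c₁ c₂ : ℝ)
    (h : (0 < c₂ ∧ c₂ < 2 ∧ -c₂ ^ 2 / 4 < c₁ ∧ c₁ < 3 - 2 * c₂ ∧ c₁ < c₂ ^ 2 ∧
            2 * c₂ ^ 3 + 9 * c₁ * c₂ + 27 * c₀
              + 2 * (c₂ ^ 2 + 3 * c₁) ^ ((3 : ℝ) / 2) > 0) ∨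
         (0 < c₂ ∧ c₂ < 1 ∧ c₁ ≥ c₂ ^ 2 ∧ c₀ + c₁ * c₂ > 0)) :
    ∃ μ : ℝ, 0 < μ ∧ μ < 1 ∧ μ < c₂ ∧ μ * (μ - c₂) < c₁ ∧
      μ ^ 3 - c₂ * μ ^ 2 - c₁ * μ < c₀ := by
  rcases h with ⟨hc₂, hc₂₂, hc₁_lo, hc₁_hi, hc₁_sq, hdisc⟩ | ⟨hc₂, hc₂₁, hc₁, hpos⟩
  · have hx : 0 ≤ c₂ ^ 2 + 3 * c₁ := by nlinarith
    rw [rpow_three_halves hx] at hdisc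
    exact exists_of_critical_value_lt (Real.sqrt_nonneg _) (Real.sq_sqrt hx) hc₂ hc₂₂
      hc₁_lo hc₁_hi hc₁_sq hdisc
  · exact exists_of_pos_of_add_mul_pos hc₂ hc₂₁ (by nlinarith) hpos
end

section
/- For all real numbers c₀, c₁, c₂, μ, y₀, y₁, y₂ such that 0 < μ < 1, μ < c₂, μ·(μ − c₂) < c₁, μ³ − c₂·μ² − c₁·μ < c₀, y₀ ≥ 0, y₁ ≥ μ·y₀, and y₂ ≥ μ·y₁, one has c₀·y₀ + c₁·y₁ + c₂·y₂ ≥ μ·y₂. -/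
/-! Peel off the monomials from the top: since `c₂ - μ ≥ 0` and `y₂ ≥ μ y₁`, the term `(c₂ - μ) y₂`
dominates `(c₂ - μ) μ y₁`; the new coefficient `c₁ + (c₂ - μ) μ` of `y₁` is again nonnegative, so the
same step with `y₁ ≥ μ y₀` leaves `(c₀ + c₁ μ + c₂ μ² - μ³) y₀ ≥ 0`. The three conditions defining the
domain are exactly the positivity of these Horner-type coefficients. -/

theorem add_mul_mul_le_mul_add_mul {R : Type*} [Semiring R] [PartialOrder R] [IsOrderedRing R]
    {μ b y y' : R} (c : R) (hb : 0 ≤ b) (hy : μ * y ≤ y') :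
    (c + b * μ) * y ≤ c * y + b * y' := by
  rw [add_mul, mul_assoc]
  exact add_le_add_right (mul_le_mul_of_nonneg_left hy hb) _

theorem stmt_10_general (c₀ c₁ c₂ μ y₀ y₁ y₂ : ℝ)
    (h₃ : μ < c₂)
    (h₄ : μ * (μ - c₂) < c₁) (h₅ : μ ^ 3 - c₂ * μ ^ 2 - c₁ * μ < c₀)
    (hy₀ : y₀ ≥ 0) (hy₁ : y₁ ≥ μ * y₀) (hy₂ : y₂ ≥ μ * y₁) :
    c₀ * y₀ + c₁ * y₁ + c₂ * y₂ ≥ μ * y₂ := by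
  have hb₂ : 0 ≤ c₂ - μ := by linarith
  have hb₁ : 0 ≤ c₁ + (c₂ - μ) * μ := by linarith
  have hb₀ : 0 ≤ c₀ + (c₁ + (c₂ - μ) * μ) * μ := by linarith
  have step₂ := add_mul_mul_le_mul_add_mul c₁ hb₂ hy₂
  have step₁ := add_mul_mul_le_mul_add_mul c₀ hb₁ hy₁
  have := mul_nonneg hb₀ hy₀
  linarith

theorem stmt_10 (c₀ c₁ c₂ μ y₀ y₁ y₂ : ℝ)
    (h₁ : 0 < μ) (h₂ : μ < 1) (h₃ : μ < c₂)
    (h₄ : μ * (μ - c₂) < c₁) (h₅ : μ ^ 3 - c₂ * μ ^ 2 - c₁ * μ < c₀)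
    (hy₀ : y₀ ≥ 0) (hy₁ : y₁ ≥ μ * y₀) (hy₂ : y₂ ≥ μ * y₁) :
    c₀ * y₀ + c₁ * y₁ + c₂ * y₂ ≥ μ * y₂ :=
  stmt_10_general c₀ c₁ c₂ μ y₀ y₁ y₂ h₃ h₄ h₅ hy₀ hy₁ hy₂
end

section
/- Let u, v be real numbers with |u| − 1 < v < 1, 4v < (u+1)², and u < 1. Then the triple (c₀, c₁, c₂) = (v, u−v, 1−u) satisfies either (0 < c₂ < 2 and −c₂²/4 < c₁ and c₁ < 3 − 2c₂ and c₁ < c₂² and 2c₂³ + 9c₁c₂ + 27c₀ + 2(c₂² + 3c₁)^{3/2} > 0) or (0 < c₂ < 1 and c₁ ≥ c₂² and c₀ + c₁c₂ > 0). -/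
theorem stmt_11 (u v : ℝ) (h₁ : |u| - 1 < v) (h₂ : v < 1)
    (h₃ : 4 * v < (u + 1) ^ 2) (h₄ : u < 1) :
    (0 < 1 - u ∧ 1 - u < 2 ∧ -(1 - u) ^ 2 / 4 < u - v ∧ u - v < 3 - 2 * (1 - u) ∧
       u - v < (1 - u) ^ 2 ∧
       2 * (1 - u) ^ 3 + 9 * (u - v) * (1 - u) + 27 * v
         + 2 * ((1 - u) ^ 2 + 3 * (u - v)) ^ ((3 : ℝ) / 2) > 0) ∨
    (0 < 1 - u ∧ 1 - u < 1 ∧ u - v ≥ (1 - u) ^ 2 ∧ v + (u - v) * (1 - u) > 0) := by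
  have hv1 : u - 1 < v := by have := le_abs_self u; linarith
  have hv2 : -u - 1 < v := by have := neg_abs_le u; linarith
  by_cases hc : u - v < (1 - u) ^ 2
  · -- left disjunct
    left
    have hu1 : -1 < u := by nlinarith [sq_nonneg (u + 1), sq_nonneg (u + 5)]
    set S : ℝ := (1 - u) ^ 2 + 3 * (u - v) with hSdef
    set A : ℝ := 2 * (1 - u) ^ 3 + 9 * (u - v) * (1 - u) + 27 * v with hAdef
    have hSpos : 0 < S := by nlinarith [sq_nonneg (1 - u)]
    have hSnn : (0 : ℝ) ≤ S := le_of_lt hSpos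
    set s : ℝ := Real.sqrt S with hsdef
    have hs2 : s ^ 2 = S := Real.sq_sqrt hSnn
    have hspos : 0 < s := Real.sqrt_pos.mpr hSpos
    have key : S ^ ((3 : ℝ) / 2) = s ^ 3 := by
      rw [hsdef, Real.sqrt_eq_rpow, ← Real.rpow_natCast (S ^ ((1 : ℝ) / 2)) 3,
        ← Real.rpow_mul hSnn]
      norm_num
    refine ⟨by linarith, by linarith, by nlinarith, by linarith, hc, ?_⟩
    rw [key]
    have hs3pos : 0 < s ^ 3 := pow_pos hspos 3
    rcases lt_or_ge 0 A with hA | hA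
    · nlinarith
    · -- A ≤ 0 ; then necessarily u^2 > 4*v
      have h6 : 4 * v < u ^ 2 := by
        by_contra h
        push_neg at h
        nlinarith [mul_nonneg (by linarith : (0:ℝ) ≤ 18 + 9 * u)
          (by linarith : (0:ℝ) ≤ 4 * v - u ^ 2), pow_pos (by linarith : (0:ℝ) < u + 2) 3]
      have huv1 : 0 < u + v + 1 := by linarith
      have hD : 4 * S ^ 3 - A ^ 2 = 27 * (u ^ 2 - 4 * v) * (u + v + 1) ^ 2 := by
        rw [hSdef, hAdef]; ring
      have hDpos : 4 * S ^ 3 > A ^ 2 := by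
        nlinarith [mul_pos (mul_pos (by linarith : (0:ℝ) < 27)
          (by linarith : (0:ℝ) < u ^ 2 - 4 * v)) (pow_pos huv1 2)]
      have hsq : (2 * s ^ 3) ^ 2 = 4 * S ^ 3 := by
        calc (2 * s ^ 3) ^ 2 = 4 * (s ^ 2) ^ 3 := by ring
          _ = 4 * S ^ 3 := by rw [hs2]
      have h2 : (0:ℝ) < 2 * s ^ 3 - A := by linarith
      by_contra h
      push_neg at h
      have h3 := mul_nonneg (le_of_lt h2) (by linarith : (0:ℝ) ≤ -(A + 2 * s ^ 3))
      nlinarith [hsq, hDpos, h3]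
  · -- right disjunct
    right
    push_neg at hc
    have hu0 : 0 < u := by nlinarith
    refine ⟨by linarith, by nlinarith, hc, ?_⟩
    have h7 : 0 < 1 - u + v := by linarith
    nlinarith [mul_pos hu0 h7]
end

section
/- Let u, v be real numbers with |u| − 1 < v < 1, 4v < (u+1)², and u < 1, and let p₀, p₁, p₂, p₃ be real polynomials with p₃(n) ≠ 0 for every natural number n, such that p₀(n)/p₃(n) → v, p₁(n)/p₃(n) → u−v, and p₂(n)/p₃(n) → 1−u as n → ∞. Then there exist a real number μ with 0 < μ < 1 and a natural number ξ such that for every natural number n ≥ ξ and all real numbers y₀, y₁, y₂ with y₀ ≥ 0, y₁ ≥ μ·y₀, and y₂ ≥ μ·y₁, one has (p₀(n)/p₃(n))·y₀ + (p₁(n)/p₃(n))·y₁ + (p₂(n)/p₃(n))·y₂ ≥ μ·y₂. -/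
open Polynomial Filter

private lemma stmt_12_mu (u v : ℝ) (h₁ : |u| - 1 < v) (h₂ : v < 1)
    (h₃ : 4 * v < (u + 1) ^ 2) (h₄ : u < 1) :
    ∃ μ : ℝ, 0 < μ ∧ μ < 1 ∧ 0 < μ ^ 2 + u * μ + v ∧
      0 < (u - v) + (1 - u) * μ - μ ^ 2 ∧ μ < 1 - u := by
  have habs1 : -u - 1 < v := by linarith [neg_abs_le u]
  have habs2 : u - 1 < v := by linarith [le_abs_self u]
  have hu1 : -1 < u := by
    by_contra hc
    push_neg at hc
    have hw : 0 ≤ (-u - 1) * (1 - (-u - 1)) :=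
      mul_nonneg (by linarith) (by linarith)
    nlinarith [hw]
  rcases lt_or_ge (-(1 - u) * (1 + u)) (4 * v) with hcase | hcase
  · -- μ := (1-u)/2 works
    refine ⟨(1 - u) / 2, by linarith, by linarith, by nlinarith, by nlinarith, by linarith⟩
  · -- here v < 0; take μ slightly above the larger root of x² + ux + v
    have hv0 : v < 0 := by
      by_contra hvc
      push_neg at hvc
      have hprod : 0 < (1 + v - u) * (1 + v + u) :=
        mul_pos (by linarith) (by linarith)
      have hvv : 0 ≤ v * (1 - v) := mul_nonneg hvc (by linarith)
      nlinarith [hprod, hvv]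
    obtain ⟨s, hs0, hs2⟩ : ∃ s : ℝ, 0 ≤ s ∧ s ^ 2 = u ^ 2 - 4 * v :=
      ⟨Real.sqrt (u ^ 2 - 4 * v), Real.sqrt_nonneg _, Real.sq_sqrt (by nlinarith [sq_nonneg u])⟩
    obtain ⟨t, ht0, ht2⟩ : ∃ t : ℝ, 0 ≤ t ∧ t ^ 2 = (1 + u) ^ 2 - 4 * v :=
      ⟨Real.sqrt ((1 + u) ^ 2 - 4 * v), Real.sqrt_nonneg _,
        Real.sq_sqrt (by nlinarith [sq_nonneg (1 + u)])⟩
    have hsu : -u < s := by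
      by_contra hc
      push_neg at hc
      have h2 : 0 ≤ (-u - s) * (-u + s) := mul_nonneg (by linarith) (by linarith)
      nlinarith [h2]
    have hsu' : u < s := by
      by_contra hc
      push_neg at hc
      have h2 : 0 ≤ (u - s) * (u + s) := mul_nonneg (by linarith) (by linarith)
      nlinarith [h2]
    have hta : s - 1 < t := by
      by_contra hc
      push_neg at hc
      have h2 : 0 ≤ (s - 1 - t) * (s - 1 + t) := mul_nonneg (by linarith) (by linarith)
      nlinarith [h2]
    have htb : 1 - s < t := by
      by_contra hc
      push_neg at hc
      have h2 : 0 ≤ (1 - s - t) * (1 - s + t) := mul_nonneg (by linarith) (by linarith)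
      nlinarith [h2]
    obtain ⟨r, hr_def⟩ : ∃ r : ℝ, r = (-u + s) / 2 := ⟨_, rfl⟩
    obtain ⟨P, hP_def⟩ : ∃ P : ℝ, P = ((1 - u) + t) / 2 := ⟨_, rfl⟩
    have hr0 : 0 < r := by rw [hr_def]; linarith
    have hr1 : r < 1 := by
      have hs2' : s < 2 + u := by
        by_contra hc
        push_neg at hc
        have h2 : 0 ≤ (s - 2 - u) * (s + 2 + u) := mul_nonneg (by linarith) (by linarith)
        nlinarith [h2]
      rw [hr_def]; linarith
    have hru : r < 1 - u := by
      have hs2'' : s < 2 - u := by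
        by_contra hc
        push_neg at hc
        have h2 : 0 ≤ (s - 2 + u) * (s + 2 - u) := mul_nonneg (by linarith) (by linarith)
        nlinarith [h2]
      rw [hr_def]; linarith
    have hrP : r < P := by rw [hr_def, hP_def]; linarith
    obtain ⟨M, hM_def⟩ : ∃ M : ℝ, M = min 1 (min (1 - u) P) := ⟨_, rfl⟩
    have hM1 : M ≤ 1 := hM_def ▸ min_le_left _ _
    have hMu : M ≤ 1 - u := hM_def ▸ le_trans (min_le_right _ _) (min_le_left _ _)
    have hMP : M ≤ P := hM_def ▸ le_trans (min_le_right _ _) (min_le_right _ _)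
    have hrM : r < M := hM_def ▸ lt_min hr1 (lt_min hru hrP)
    refine ⟨(r + M) / 2, by linarith, by linarith, ?_, ?_, by linarith⟩
    · -- f(μ) = (μ - r)(μ + u + r), and r² + u r + v = 0
      have hroot : r ^ 2 + u * r + v = 0 := by rw [hr_def]; linear_combination hs2 / 4
      have h1 : (0:ℝ) < (r + M) / 2 - r := by linarith
      have h2 : (0:ℝ) < (r + M) / 2 + u + r := by
        have : 2 * r + u = s := by rw [hr_def]; ring
        linarith
      have key1 : ((r + M) / 2) ^ 2 + u * ((r + M) / 2) + v
          = ((r + M) / 2 - r) * ((r + M) / 2 + u + r) + (r ^ 2 + u * r + v) := by ring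
      linarith [mul_pos h1 h2, key1]
    · -- g(μ) = (P - μ)(μ - Q) with Q = (1-u-t)/2
      have h1 : (0:ℝ) < P - (r + M) / 2 := by linarith
      have h2 : (0:ℝ) < (r + M) / 2 - (1 - u - t) / 2 := by
        have : (0:ℝ) < r - (1 - u - t) / 2 := by rw [hr_def]; linarith
        linarith
      have key2 : (u - v) + (1 - u) * ((r + M) / 2) - ((r + M) / 2) ^ 2
          = (P - (r + M) / 2) * ((r + M) / 2 - (1 - u - t) / 2)
            + ((1 + u) ^ 2 - 4 * v - t ^ 2) / 4 := by rw [hP_def]; ring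
      linarith [mul_pos h1 h2, key2]

theorem stmt_12 (u v : ℝ) (h₁ : |u| - 1 < v) (h₂ : v < 1)
    (h₃ : 4 * v < (u + 1) ^ 2) (h₄ : u < 1)
    (p₀ p₁ p₂ p₃ : Polynomial ℝ)
    (hp₃ : ∀ n : ℕ, p₃.eval (n : ℝ) ≠ 0)
    (hlim₀ : Tendsto (fun n : ℕ => p₀.eval (n : ℝ) / p₃.eval (n : ℝ)) atTop (nhds v))
    (hlim₁ : Tendsto (fun n : ℕ => p₁.eval (n : ℝ) / p₃.eval (n : ℝ)) atTop (nhds (u - v)))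
    (hlim₂ : Tendsto (fun n : ℕ => p₂.eval (n : ℝ) / p₃.eval (n : ℝ)) atTop (nhds (1 - u))) :
    ∃ μ : ℝ, 0 < μ ∧ μ < 1 ∧ ∃ ξ : ℕ, ∀ n : ℕ, ξ ≤ n →
      ∀ y₀ y₁ y₂ : ℝ, y₀ ≥ 0 → y₁ ≥ μ * y₀ → y₂ ≥ μ * y₁ →
        (p₀.eval (n : ℝ) / p₃.eval (n : ℝ)) * y₀
          + (p₁.eval (n : ℝ) / p₃.eval (n : ℝ)) * y₁
          + (p₂.eval (n : ℝ) / p₃.eval (n : ℝ)) * y₂ ≥ μ * y₂ := by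
  obtain ⟨μ, hμ0, hμ1, hf, hg, hμu⟩ := stmt_12_mu u v h₁ h₂ h₃ h₄
  have hkeyA : μ ^ 3 < v + (u - v) * μ + (1 - u) * μ ^ 2 := by
    have hprod : 0 < (1 - μ) * (μ ^ 2 + u * μ + v) := mul_pos (by linarith) hf
    nlinarith [hprod]
  have hkeyB : μ ^ 2 < (u - v) + (1 - u) * μ := by linarith
  have hlimA : Tendsto
      (fun n : ℕ => p₀.eval (n : ℝ) / p₃.eval (n : ℝ)
        + p₁.eval (n : ℝ) / p₃.eval (n : ℝ) * μ
        + p₂.eval (n : ℝ) / p₃.eval (n : ℝ) * μ ^ 2) atTop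
      (nhds (v + (u - v) * μ + (1 - u) * μ ^ 2)) :=
    (hlim₀.add (hlim₁.mul_const μ)).add (hlim₂.mul_const (μ ^ 2))
  have hlimB : Tendsto
      (fun n : ℕ => p₁.eval (n : ℝ) / p₃.eval (n : ℝ)
        + p₂.eval (n : ℝ) / p₃.eval (n : ℝ) * μ) atTop
      (nhds ((u - v) + (1 - u) * μ)) := hlim₁.add (hlim₂.mul_const μ)
  have hA : ∀ᶠ n : ℕ in atTop, μ ^ 3 < p₀.eval (n : ℝ) / p₃.eval (n : ℝ)
      + p₁.eval (n : ℝ) / p₃.eval (n : ℝ) * μ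
      + p₂.eval (n : ℝ) / p₃.eval (n : ℝ) * μ ^ 2 :=
    hlimA.eventually (eventually_gt_nhds hkeyA)
  have hB : ∀ᶠ n : ℕ in atTop, μ ^ 2 < p₁.eval (n : ℝ) / p₃.eval (n : ℝ)
      + p₂.eval (n : ℝ) / p₃.eval (n : ℝ) * μ :=
    hlimB.eventually (eventually_gt_nhds hkeyB)
  have hC : ∀ᶠ n : ℕ in atTop, μ < p₂.eval (n : ℝ) / p₃.eval (n : ℝ) :=
    hlim₂.eventually (eventually_gt_nhds hμu)
  obtain ⟨ξ, hξ⟩ := eventually_atTop.mp ((hA.and hB).and hC)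
  refine ⟨μ, hμ0, hμ1, ξ, ?_⟩
  intro n hn y₀ y₁ y₂ hy0 hy1 hy2
  obtain ⟨⟨hA', hB'⟩, hC'⟩ := hξ n hn
  have k1 : 0 ≤ (p₀.eval (n : ℝ) / p₃.eval (n : ℝ)
      + p₁.eval (n : ℝ) / p₃.eval (n : ℝ) * μ
      + p₂.eval (n : ℝ) / p₃.eval (n : ℝ) * μ ^ 2 - μ ^ 3) * y₀ :=
    mul_nonneg (by linarith only [hA']) hy0
  have k2 : 0 ≤ (p₁.eval (n : ℝ) / p₃.eval (n : ℝ)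
      + p₂.eval (n : ℝ) / p₃.eval (n : ℝ) * μ - μ ^ 2) * (y₁ - μ * y₀) :=
    mul_nonneg (by linarith only [hB']) (by linarith only [hy1])
  have k3 : 0 ≤ (p₂.eval (n : ℝ) / p₃.eval (n : ℝ) - μ) * (y₂ - μ * y₁) :=
    mul_nonneg (by linarith only [hC']) (by linarith only [hy2])
  linarith only [k1, k2, k3]
end

section
/- Let u, v be real numbers with u < 1, v > 0, 1 − u + u² − v > 0, and (u > 0 or u² − v − uv + v² < 0). Then for all real numbers y₀, y₁, y₂ with y₀ ≥ 0, y₁ ≥ 0, y₂ ≥ 0, and v·y₀ + (u−v)·y₁ + (1−u)·y₂ ≥ 0, one has (1−u)·v·y₀ + u·(1−u+v)·y₁ + (1−u+u²−v)·y₂ ≥ 0. -/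
theorem stmt_14 (u v : ℝ) (h₁ : u < 1) (h₂ : v > 0)
    (h₃ : 1 - u + u ^ 2 - v > 0) (h₄ : u > 0 ∨ u ^ 2 - v - u * v + v ^ 2 < 0) :
    ∀ y₀ y₁ y₂ : ℝ, y₀ ≥ 0 → y₁ ≥ 0 → y₂ ≥ 0 →
      v * y₀ + (u - v) * y₁ + (1 - u) * y₂ ≥ 0 →
      (1 - u) * v * y₀ + u * (1 - u + v) * y₁ + (1 - u + u ^ 2 - v) * y₂ ≥ 0 := by
  intro y₀ y₁ y₂ h0 h1 h2 hh
  rcases le_or_gt u 0 with hu | hu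
  · have hq : u ^ 2 - v - u * v + v ^ 2 < 0 := by
      rcases h₄ with h | h
      · linarith
      · exact h
    -- (v-u)*G = (-u*(1-u+v))*H + v^2*y₀ + (v+u*v-u^2-v^2)*y₂
    nlinarith [mul_nonneg (mul_nonneg (neg_nonneg.mpr hu) (by linarith : (0:ℝ) ≤ 1 - u + v)) hh,
      mul_nonneg (mul_nonneg h₂.le h₂.le) h0,
      mul_nonneg (by nlinarith : (0:ℝ) ≤ v + u * v - u ^ 2 - v ^ 2) h2]
  · rcases le_or_gt u v with huv | huv
    · have := mul_nonneg (mul_nonneg (by linarith : (0:ℝ) ≤ 1 - u) h₂.le) h0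
      have := mul_nonneg (mul_nonneg hu.le (by linarith : (0:ℝ) ≤ 1 - u + v)) h1
      have := mul_nonneg h₃.le h2
      nlinarith
    · -- G = (1-u)*H + v*y₁ + (u-v)*y₂
      nlinarith [mul_nonneg (by linarith : (0:ℝ) ≤ 1 - u) hh,
        mul_nonneg h₂.le h1, mul_nonneg (by linarith : (0:ℝ) ≤ u - v) h2]
end

section
/- Let u, v be real numbers with 0 < v < u < 1, and let p₀, p₁, p₂, p₃ be real polynomials with p₃(n) ≠ 0 for every natural number n, such that p₀(n)/p₃(n) → v, p₁(n)/p₃(n) → u−v, and p₂(n)/p₃(n) → 1−u as n → ∞. Then there exists a natural number n₀ such that every sequence f : ℕ → ℝ satisfying p₃(n)f(n+3) − p₂(n)f(n+2) − p₁(n)f(n+1) − p₀(n)f(n) = 0 for all n ∈ ℕ and f(n) ≥ 0 for all natural numbers n ≤ n₀ + 2 satisfies f(n) ≥ 0 for all n ∈ ℕ. -/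
open Polynomial Filter

theorem stmt_16 (u v : ℝ) (h₁ : 0 < v) (h₂ : v < u) (h₃ : u < 1)
    (p₀ p₁ p₂ p₃ : Polynomial ℝ)
    (hp₃ : ∀ n : ℕ, p₃.eval (n : ℝ) ≠ 0)
    (hlim₀ : Tendsto (fun n : ℕ => p₀.eval (n : ℝ) / p₃.eval (n : ℝ)) atTop (nhds v))
    (hlim₁ : Tendsto (fun n : ℕ => p₁.eval (n : ℝ) / p₃.eval (n : ℝ)) atTop (nhds (u - v)))
    (hlim₂ : Tendsto (fun n : ℕ => p₂.eval (n : ℝ) / p₃.eval (n : ℝ)) atTop (nhds (1 - u))) :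
    ∃ n₀ : ℕ, ∀ f : ℕ → ℝ,
      (∀ n : ℕ, p₃.eval (n : ℝ) * f (n + 3) - p₂.eval (n : ℝ) * f (n + 2)
        - p₁.eval (n : ℝ) * f (n + 1) - p₀.eval (n : ℝ) * f n = 0) →
      (∀ n : ℕ, n ≤ n₀ + 2 → f n ≥ 0) →
      ∀ n : ℕ, f n ≥ 0 := by
  have e₀ : ∀ᶠ n : ℕ in atTop, 0 < p₀.eval (n : ℝ) / p₃.eval (n : ℝ) :=
    hlim₀.eventually (eventually_gt_nhds h₁)
  have e₁ : ∀ᶠ n : ℕ in atTop, 0 < p₁.eval (n : ℝ) / p₃.eval (n : ℝ) :=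
    hlim₁.eventually (eventually_gt_nhds (by linarith))
  have e₂ : ∀ᶠ n : ℕ in atTop, 0 < p₂.eval (n : ℝ) / p₃.eval (n : ℝ) :=
    hlim₂.eventually (eventually_gt_nhds (by linarith))
  obtain ⟨n₀, hn₀⟩ := eventually_atTop.1 ((e₀.and e₁).and e₂)
  refine ⟨n₀, fun f hrec hinit n => ?_⟩
  induction n using Nat.strong_induction_on with
  | _ n ih =>
    rcases le_or_gt n (n₀ + 2) with h | h
    · exact hinit n h
    · obtain ⟨m, rfl⟩ : ∃ m, n = m + 3 := ⟨n - 3, by omega⟩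
      have hm : n₀ ≤ m := by omega
      obtain ⟨⟨q0, q1⟩, q2⟩ := hn₀ m hm
      have h3 := hp₃ m
      have key : f (m + 3) = p₂.eval (m : ℝ) / p₃.eval (m : ℝ) * f (m + 2)
          + p₁.eval (m : ℝ) / p₃.eval (m : ℝ) * f (m + 1)
          + p₀.eval (m : ℝ) / p₃.eval (m : ℝ) * f m := by
        have := hrec m
        field_simp
        linarith
      rw [key]
      have i0 := ih m (by omega)
      have i1 := ih (m + 1) (by omega)
      have i2 := ih (m + 2) (by omega)
      positivity
end
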